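/- Let $f$ be $\mu$-strongly convex and $\tilde L$-smooth with minimizer $w^*$, and $g(w)$ satisfy $\|g(w) - \nabla f(w)\| \leq \delta \|\nabla f(w)\|$ with $\delta\tilde L < \mu$. For the biased gradient step $w' = w - \eta g(w)$, $\|w' - w^*\|^2 \leq \big(1 - 2(\mu - \delta\tilde L)\eta + (1+\delta)^2\tilde L^2\eta^2\big)\|w - w^*\|^2$. -/

import Mathlib

/-!
Strong convexity makes the gradient strongly monotone, `μ‖w - w*‖² ≤ ⟪∇f w, w - w*⟫` since
`∇f w* = 0`: the convex function `f - μ/2‖·‖²` has monotone derivative along every segment.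
With the relative error `‖g - ∇f‖ ≤ δ‖∇f‖` and `‖∇f w‖ ≤ L‖w - w*‖`, this gives
`⟪g w, w - w*⟫ ≥ (μ - δL)‖w - w*‖²` and `‖g w‖ ≤ (1 + δ)L‖w - w*‖`, which bound the cross
term and the quadratic term of `‖(w - w*) - η g w‖² = ‖w - w*‖² - 2η⟪g w, w - w*⟫ + η²‖g w‖²`.
-/

open InnerProductSpace Set
open scoped Gradient

section NormedSpace

variable {E : Type*} [NormedAddCommGroup E] [NormedSpace ℝ E]

theorem ConvexOn.fderiv_apply_sub_le {s : Set E} {h : E → ℝ} (hh : ConvexOn ℝ s h)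
    (hd : ∀ z ∈ s, DifferentiableAt ℝ h z) {x y : E} (hx : x ∈ s) (hy : y ∈ s) :
    fderiv ℝ h x (y - x) ≤ fderiv ℝ h y (y - x) := by
  let ℓ : ℝ →ᵃ[ℝ] E := AffineMap.lineMap x y
  have hderiv : ∀ t ∈ ℓ ⁻¹' s, HasDerivAt (h ∘ ℓ) (fderiv ℝ h (ℓ t) (y - x)) t := fun t ht ↦
    (hd _ ht).hasFDerivAt.comp_hasDerivAt t AffineMap.hasDerivAt_lineMap
  have h0 : (0 : ℝ) ∈ ℓ ⁻¹' s := by simpa [ℓ] using hx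
  have h1 : (1 : ℝ) ∈ ℓ ⁻¹' s := by simpa [ℓ] using hy
  have hmono := (hh.comp_affineMap ℓ).monotoneOn_deriv (fun t ht ↦ (hderiv t ht).differentiableAt)
    h0 h1 zero_le_one
  rwa [(hderiv 0 h0).deriv, (hderiv 1 h1).deriv, AffineMap.lineMap_apply_zero,
    AffineMap.lineMap_apply_one] at hmono

end NormedSpace

theorem norm_le_of_norm_sub_le {G : Type*} [SeminormedAddCommGroup G] {u v w : G} {L δ : ℝ}
    (hδ : 0 ≤ δ) (hnorm : ‖w‖ ≤ L * ‖u‖) (hvw : ‖v - w‖ ≤ δ * ‖w‖) : ‖v‖ ≤ (1 + δ) * L * ‖u‖ :=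
  calc ‖v‖ ≤ ‖v - w‖ + ‖w‖ := norm_le_norm_sub_add v w
    _ ≤ (1 + δ) * ‖w‖ := by linarith
    _ ≤ (1 + δ) * L * ‖u‖ := by rw [mul_assoc]; gcongr

section InnerProductSpace

variable {F : Type*} [NormedAddCommGroup F] [InnerProductSpace ℝ F]

theorem StrongConvexOn.mul_norm_sq_le_fderiv_apply_sub {s : Set F} {m : ℝ} {f : F → ℝ}
    (hf : StrongConvexOn s m f) (hd : ∀ z ∈ s, DifferentiableAt ℝ f z) {x y : F}
    (hx : x ∈ s) (hy : y ∈ s) :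
    m * ‖y - x‖ ^ 2 ≤ fderiv ℝ f y (y - x) - fderiv ℝ f x (y - x) := by
  have hderiv : ∀ z ∈ s, HasFDerivAt (fun x ↦ f x - m / 2 * ‖x‖ ^ 2)
      (fderiv ℝ f z - (m / 2) • (2 • innerSL ℝ z)) z := fun z hz ↦
    (hd z hz).hasFDerivAt.sub ((hasStrictFDerivAt_norm_sq z).hasFDerivAt.const_mul (m / 2))
  have hmono := (strongConvexOn_iff_convex.mp hf).fderiv_apply_sub_le
    (fun z hz ↦ (hderiv z hz).differentiableAt) hx hy
  rw [(hderiv x hx).fderiv, (hderiv y hy).fderiv] at hmono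
  have hsq : ‖y - x‖ ^ 2 = inner ℝ y (y - x) - inner ℝ x (y - x) := by
    rw [← inner_sub_left, real_inner_self_eq_norm_sq]
  simp only [sub_apply, smul_apply, innerSL_apply_apply, smul_eq_mul, nsmul_eq_mul] at hmono
  rw [hsq]
  linarith

theorem StrongConvexOn.mul_norm_sq_le_inner_gradient_sub [CompleteSpace F] {s : Set F} {m : ℝ}
    {f : F → ℝ} (hf : StrongConvexOn s m f) (hd : ∀ z ∈ s, DifferentiableAt ℝ f z) {x y : F}
    (hx : x ∈ s) (hy : y ∈ s) :
    m * ‖y - x‖ ^ 2 ≤ inner ℝ (∇ f y - ∇ f x) (y - x) := by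
  have key := hf.mul_norm_sq_le_fderiv_apply_sub hd hx hy
  rwa [← toDual_gradient (f := f) (x := y), ← toDual_gradient (f := f) (x := x),
    toDual_apply_apply, toDual_apply_apply, ← inner_sub_left] at key

theorem IsLocalMin.gradient_eq_zero [CompleteSpace F] {f : F → ℝ} {a : F} (h : IsLocalMin f a) :
    ∇ f a = 0 := by
  rw [gradient, h.fderiv_eq_zero, map_zero]

theorem sub_mul_norm_sq_le_inner_of_norm_sub_le {u v w : F} {μ L δ : ℝ} (hδ : 0 ≤ δ)
    (hinner : μ * ‖u‖ ^ 2 ≤ inner ℝ w u) (hnorm : ‖w‖ ≤ L * ‖u‖) (hvw : ‖v - w‖ ≤ δ * ‖w‖) :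
    (μ - δ * L) * ‖u‖ ^ 2 ≤ inner ℝ v u := by
  have herr : ‖v - w‖ * ‖u‖ ≤ δ * L * ‖u‖ ^ 2 := by
    calc ‖v - w‖ * ‖u‖ ≤ δ * (L * ‖u‖) * ‖u‖ := by gcongr; exact hvw.trans (by gcongr)
      _ = δ * L * ‖u‖ ^ 2 := by ring
  have hsplit : inner ℝ v u = inner ℝ w u + inner ℝ (v - w) u := by
    rw [← inner_add_left, add_sub_cancel]
  have hcross := neg_le_of_abs_le ((abs_real_inner_le_norm (v - w) u).trans herr)
  linarith

theorem norm_sub_smul_sq_le {u v : F} {c K η : ℝ} (hη : 0 ≤ η)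
    (hinner : c * ‖u‖ ^ 2 ≤ inner ℝ v u) (hnorm : ‖v‖ ≤ K * ‖u‖) :
    ‖u - η • v‖ ^ 2 ≤ (1 - 2 * c * η + K ^ 2 * η ^ 2) * ‖u‖ ^ 2 := by
  have hsq : ‖v‖ ^ 2 ≤ K ^ 2 * ‖u‖ ^ 2 := by
    simpa only [mul_pow] using pow_le_pow_left₀ (norm_nonneg v) hnorm 2
  rw [norm_sub_sq_real, real_inner_smul_right, real_inner_comm, norm_smul, mul_pow,
    Real.norm_eq_abs, sq_abs]
  nlinarith [mul_le_mul_of_nonneg_left hinner hη, mul_le_mul_of_nonneg_left hsq (sq_nonneg η)]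

end InnerProductSpace

theorem biased_gradient_step_contraction_general
    {d : ℕ} (f : EuclideanSpace ℝ (Fin d) → ℝ) (μ L δ : ℝ)
    (hsc : StrongConvexOn Set.univ μ f) (hdiff : Differentiable ℝ f)
    (hlip : ∀ x y, ‖gradient f x - gradient f y‖ ≤ L * ‖x - y‖)
    (wstar : EuclideanSpace ℝ (Fin d)) (hmin : ∀ w, f wstar ≤ f w)
    (g : EuclideanSpace ℝ (Fin d) → EuclideanSpace ℝ (Fin d))
    (hδ : 0 ≤ δ)
    (hbias : ∀ w, ‖g w - gradient f w‖ ≤ δ * ‖gradient f w‖)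
    (η : ℝ) (hη : 0 ≤ η) :
    ∀ w, ‖w - η • g w - wstar‖ ^ 2 ≤
      (1 - 2 * (μ - δ * L) * η + (1 + δ) ^ 2 * L ^ 2 * η ^ 2) *
        ‖w - wstar‖ ^ 2 := by
  intro w
  have hcrit : ∇ f wstar = 0 := IsLocalMin.gradient_eq_zero (.of_forall hmin)
  have hinner : μ * ‖w - wstar‖ ^ 2 ≤ inner ℝ (∇ f w) (w - wstar) := by
    simpa only [hcrit, sub_zero] using hsc.mul_norm_sq_le_inner_gradient_sub
      (fun z _ ↦ hdiff z) (mem_univ wstar) (mem_univ w)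
  have hnorm : ‖∇ f w‖ ≤ L * ‖w - wstar‖ := by simpa only [hcrit, sub_zero] using hlip w wstar
  rw [sub_right_comm, ← mul_pow]
  exact norm_sub_smul_sq_le hη (sub_mul_norm_sq_le_inner_of_norm_sub_le hδ hinner hnorm (hbias w))
    (norm_le_of_norm_sub_le hδ hnorm (hbias w))

/-- One step of biased gradient descent contracts the squared distance to the
minimizer (deterministic case with `ε = 0`). -/
theorem biased_gradient_step_contraction
    {d : ℕ} (f : EuclideanSpace ℝ (Fin d) → ℝ) (μ L δ : ℝ)
    (hsc : StrongConvexOn Set.univ μ f) (hdiff : Differentiable ℝ f)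
    (hlip : ∀ x y, ‖gradient f x - gradient f y‖ ≤ L * ‖x - y‖)
    (wstar : EuclideanSpace ℝ (Fin d)) (hmin : ∀ w, f wstar ≤ f w)
    (g : EuclideanSpace ℝ (Fin d) → EuclideanSpace ℝ (Fin d))
    (hδ : 0 ≤ δ) (hδL : δ * L < μ)
    (hbias : ∀ w, ‖g w - gradient f w‖ ≤ δ * ‖gradient f w‖)
    (η : ℝ) (hη : 0 ≤ η) :
    ∀ w, ‖w - η • g w - wstar‖ ^ 2 ≤
      (1 - 2 * (μ - δ * L) * η + (1 + δ) ^ 2 * L ^ 2 * η ^ 2) *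
        ‖w - wstar‖ ^ 2 :=
  biased_gradient_step_contraction_general f μ L δ hsc hdiff hlip wstar hmin g hδ hbias η hη
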